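/- Let p : G → Q be a group homomorphism and ε : G → GL(S) a representation such that (G, p, ε) satisfies the equivariance property ρ(p(A)y) = ε(A)ρ(y)ε(A)⁻¹ for all A, y, and satisfies the universal factorization property. Then for any group G' with homomorphism p' : G' → Q, composition with p and ε gives a bijection between {homomorphisms f : G' → G with p' = p∘f} and {representations ε' : G' → GL(S) with ε'(g)∘ρ(y) = ρ(p'(g)y)∘ε'(g) for all g, y}. -/
import Mathlib


/-- Corollary of the universal property: if `(G, p, ε)` is equivariant and universal,
then for any group `G'` with `p' : G' →* Q`, composition with `ε` gives a bijection
between homomorphisms `f : G' →* G` over `Q` and equivariant representations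
`ε' : G' →* GL(S)`. -/
theorem stmt_18 (Q : Type) [Group Q] (Cl : Type) [Ring Cl] [Algebra ℂ Cl]
    (S : Type) [AddCommGroup S] [Module ℂ S]
    (ρ : Cl →ₐ[ℂ] Module.End ℂ S) (act : Q →* (Cl ≃ₐ[ℂ] Cl))
    (G : Type) [Group G] (p : G →* Q) (ε : G →* (Module.End ℂ S)ˣ)
    (hequiv : ∀ (A : G) (y : Cl), ρ (act (p A) y) = ↑(ε A) * ρ y * ↑(ε A)⁻¹)
    (huniv : ∀ (H : Type) [Group H] (pH : H →* Q) (εH : H →* (Module.End ℂ S)ˣ),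
      (∀ (g : H) (y : Cl), ρ (act (pH g) y) = ↑(εH g) * ρ y * ↑(εH g)⁻¹) →
        ∃! f : H →* G, pH = p.comp f ∧ εH = ε.comp f)
    (G' : Type) [Group G'] (p' : G' →* Q) :
    ∃ e : {f : G' →* G // p' = p.comp f} ≃
        {ε' : G' →* (Module.End ℂ S)ˣ //
          ∀ (g : G') (y : Cl), ↑(ε' g) * ρ y = ρ (act (p' g) y) * ↑(ε' g)},
      ∀ f : {f : G' →* G // p' = p.comp f}, (e f : G' →* (Module.End ℂ S)ˣ) = ε.comp f := by
  -- forward direction: ε.comp f is equivariant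
  have fwd : ∀ f : {f : G' →* G // p' = p.comp f},
      ∀ (g : G') (y : Cl),
        ↑((ε.comp f.1) g) * ρ y = ρ (act (p' g) y) * ↑((ε.comp f.1) g) := by
    rintro ⟨f, hf⟩ g y
    have h := hequiv (f g) y
    simp only [hf, MonoidHom.comp_apply] at *
    rw [h, mul_assoc, mul_assoc]
    congr 1
    rw [← Units.val_mul, inv_mul_cancel, Units.val_one, mul_one]
  -- equivariance in the other form
  have conv : ∀ ε' : {ε' : G' →* (Module.End ℂ S)ˣ //
        ∀ (g : G') (y : Cl), ↑(ε' g) * ρ y = ρ (act (p' g) y) * ↑(ε' g)},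
      ∀ (g : G') (y : Cl), ρ (act (p' g) y) = ↑(ε'.1 g) * ρ y * ↑(ε'.1 g)⁻¹ := by
    rintro ⟨ε', hε'⟩ g y
    have h := hε' g y
    rw [h, mul_assoc, ← Units.val_mul, mul_inv_cancel, Units.val_one, mul_one]
  refine ⟨⟨fun f => ⟨ε.comp f.1, fwd f⟩,
    fun ε' => ⟨(huniv G' p' ε'.1 (conv ε')).choose,
      ((huniv G' p' ε'.1 (conv ε')).choose_spec.1.1)⟩, ?_, ?_⟩, fun f => rfl⟩
  · rintro ⟨f, hf⟩
    apply Subtype.ext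
    exact ((huniv G' p' (ε.comp f) (conv ⟨ε.comp f, fwd ⟨f, hf⟩⟩)).choose_spec.2 f ⟨hf, rfl⟩).symm
  · rintro ⟨ε', hε'⟩
    apply Subtype.ext
    exact ((huniv G' p' ε' (conv ⟨ε', hε'⟩)).choose_spec.1.2).symm
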